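/- arXiv:2006.14086 — 3 statements merged into one kernel-verified Lean document; each statement's English description precedes it below -/
import Mathlib

section
/- Let B be an (n-k)×k real matrix with compact QR decomposition B = U_B R_B where U_B has orthonormal columns. Let A be a k×k skew-symmetric matrix, and let q(t) = exp(t·[[A, -Bᵀ],[B, 0]])·I_{n,k} where I_{n,k} is the first k columns of the n×n identity matrix. Define f(t) = (I - U_B U_Bᵀ)·J·q(t), where J = [0 | I_{n-k}] selects the last n-k rows. Then f(t) = 0 for all t. -/
/-!
The block matrix `N = diag(0, I - U_B U_Bᵀ)` annihilates `H`, since the projection kills the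
column span of `B = U_B R_B`. Hence `N exp(tH) = N`, and `N · I_{n,k} = 0` because `I_{n,k}`
has no lower rows; the lower block rows of `N q(t)` are `f(t)`.
-/

open Matrix NormedSpace

theorem NormedSpace.mul_exp_eq_self_of_mul_eq_zero {𝔸 : Type*} [NormedRing 𝔸]
    [NormedAlgebra ℚ 𝔸] [CompleteSpace 𝔸] {a x : 𝔸} (h : a * x = 0) : a * exp x = a := by
  simpa [SemiconjBy] using (show SemiconjBy a x 0 by simp [SemiconjBy, h]).exp_right

namespace Matrix

variable {k m n R : Type*} [Fintype k] [Fintype m]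

theorem one_sub_mul_transpose_mul_self [Fintype n] [DecidableEq m] [DecidableEq n] [CommRing R]
    {U : Matrix m n R} (hU : Uᵀ * U = 1) : (1 - U * Uᵀ) * U = 0 := by
  rw [Matrix.sub_mul, Matrix.one_mul, Matrix.mul_assoc, hU, Matrix.mul_one, sub_self]

theorem submatrix_inr_fromBlocks_zero_mul [NonUnitalNonAssocSemiring R] (P : Matrix m m R)
    (M : Matrix (k ⊕ m) n R) :
    (fromBlocks (0 : Matrix k k R) 0 0 P * M).submatrix Sum.inr id =
      P * M.submatrix Sum.inr id := by
  ext i j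
  simp [mul_apply, Fintype.sum_sum_type]

end Matrix

/-- `Fin k ⊕ Fin m` stands for `{1,…,n}` with `m = n - k`, so `submatrix Sum.inr id` is `J`. -/
theorem flag_qr_projection_vanishes_general {k m : ℕ}
    (A : Matrix (Fin k) (Fin k) ℝ)
    (B UB : Matrix (Fin m) (Fin k) ℝ) (RB : Matrix (Fin k) (Fin k) ℝ)
    (hQR : B = UB * RB) (hUB : UBᵀ * UB = 1)
    (H : Matrix (Fin k ⊕ Fin m) (Fin k ⊕ Fin m) ℝ)
    (hH : H = Matrix.fromBlocks A (-Bᵀ) B 0)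
    (Ink : Matrix (Fin k ⊕ Fin m) (Fin k) ℝ)
    (hInk : Ink = Matrix.of fun i j => if i = Sum.inl j then (1 : ℝ) else 0)
    (q : ℝ → Matrix (Fin k ⊕ Fin m) (Fin k) ℝ)
    (hq : ∀ t, q t = NormedSpace.exp (t • H) * Ink) :
    ∀ t : ℝ, (1 - UB * UBᵀ) * ((q t).submatrix Sum.inr id) = 0 := by
  intro t
  set P := 1 - UB * UBᵀ
  set N : Matrix (Fin k ⊕ Fin m) (Fin k ⊕ Fin m) ℝ := fromBlocks 0 0 0 P
  have hPB : P * B = 0 := by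
    rw [hQR, ← Matrix.mul_assoc, one_sub_mul_transpose_mul_self hUB, Matrix.zero_mul]
  have hNH : N * (t • H) = 0 := by
    simp [N, hH, fromBlocks_multiply, hPB]
  have hNexp : N * exp (t • H) = N :=
    open scoped Norms.Operator in mul_exp_eq_self_of_mul_eq_zero hNH
  have hInk_lower : Ink.submatrix Sum.inr id = 0 := by
    ext i j
    simp [hInk]
  calc P * (q t).submatrix Sum.inr id = (N * q t).submatrix Sum.inr id :=
        (submatrix_inr_fromBlocks_zero_mul P (q t)).symm
    _ = P * Ink.submatrix Sum.inr id := by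
        rw [hq, ← Matrix.mul_assoc, hNexp, submatrix_inr_fromBlocks_zero_mul]
    _ = 0 := by rw [hInk_lower, Matrix.mul_zero]

/-- with `B = U_B R_B` a compact QR decomposition, the function
`f(t) = (I - U_B U_Bᵀ) · J · q(t)` vanishes identically, where `q(t) = exp(tH)·I_{n,k}`
and `J` selects the last `n-k` rows.  Here the ambient index set `Fin k ⊕ Fin m`
plays the role of `{1,…,n}` with `m = n - k`. -/
theorem flag_qr_projection_vanishes {k m : ℕ} (hk : 0 < k) (hkm : k < m)
    (A : Matrix (Fin k) (Fin k) ℝ) (hA : Aᵀ = -A)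
    (B UB : Matrix (Fin m) (Fin k) ℝ) (RB : Matrix (Fin k) (Fin k) ℝ)
    (hQR : B = UB * RB) (hUB : UBᵀ * UB = 1)
    (hRtri : ∀ i j : Fin k, j < i → RB i j = 0)
    (H : Matrix (Fin k ⊕ Fin m) (Fin k ⊕ Fin m) ℝ)
    (hH : H = Matrix.fromBlocks A (-Bᵀ) B 0)
    (Ink : Matrix (Fin k ⊕ Fin m) (Fin k) ℝ)
    (hInk : Ink = Matrix.of fun i j => if i = Sum.inl j then (1 : ℝ) else 0)
    (q : ℝ → Matrix (Fin k ⊕ Fin m) (Fin k) ℝ)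
    (hq : ∀ t, q t = NormedSpace.exp (t • H) * Ink) :
    ∀ t : ℝ, (1 - UB * UBᵀ) * ((q t).submatrix Sum.inr id) = 0 :=
  flag_qr_projection_vanishes_general A B UB RB hQR hUB H hH Ink hInk q hq
end

section
/- Let B be an (n-k)×k real matrix, A a k×k skew-symmetric matrix, H = [[A, -Bᵀ],[B, 0]] the corresponding n×n skew-symmetric block matrix, and q(t) = exp(tH)·I_{n,k}. Write q(1) = q in block form as q = [q_k; q_{n-k}] with q_k the first k rows and q_{n-k} the last n-k rows. If the column spans of q(0) = I_{n,k} and q(1) intersect trivially (i.e. q_{n-k} has rank k), then the column span of q_{n-k} equals the column span of B. -/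
/-!
Write `H = [[A, C], [B, 0]]` and let `V` be the subspace of vectors whose lower block lies in the
column span of `B`. Because the lower block row of `H` is `[B, 0]`, `H` maps everything into `V`;
so `V` is `H`-invariant, hence `exp H`-invariant, and it contains the columns of `I_{n,k}`. This
gives `span q_{n-k} ⊆ span B`. Conversely, if `q(1) x` has zero lower block it lies in
`span I_{n,k} ⊓ span q(1) = 0`, and `q(1)` is injective since `exp H` is invertible; so
`q_{n-k}` is injective, its span has dimension `k ≥ rank B`, and the inclusion is an equality.
-/

open Matrix NormedSpace

/-- The column span of a matrix. -/
def colSpan {m' k' : Type*} [Fintype k'] (M : Matrix m' k' ℝ) : Submodule ℝ (m' → ℝ) :=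
  LinearMap.range M.mulVecLin

section Invariant

variable {𝕜 ι : Type*} [RCLike 𝕜] [Fintype ι] [DecidableEq ι]

def Matrix.invariantSubalgebra (p : Submodule 𝕜 (ι → 𝕜)) : Subalgebra 𝕜 (Matrix ι ι 𝕜) where
  carrier := {M | ∀ v ∈ p, M *ᵥ v ∈ p}
  mul_mem' hM hN v hv := by simpa only [← mulVec_mulVec] using hM _ (hN v hv)
  add_mem' hM hN v hv := by simpa only [add_mulVec] using p.add_mem (hM v hv) (hN v hv)
  algebraMap_mem' c v hv := by
    simpa only [Algebra.algebraMap_eq_smul_one, smul_mulVec, one_mulVec] using p.smul_mem c hv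

theorem Matrix.isClosed_invariantSubalgebra (p : Submodule 𝕜 (ι → 𝕜)) :
    IsClosed (invariantSubalgebra p : Set (Matrix ι ι 𝕜)) := by
  have hp : IsClosed (p : Set (ι → 𝕜)) := p.closed_of_finiteDimensional
  simp only [invariantSubalgebra, Subalgebra.coe_mk, Set.ofPred_forall]
  exact isClosed_iInter fun v => isClosed_iInter fun _ =>
    hp.preimage (continuous_id.matrix_mulVec continuous_const)

theorem Matrix.exp_mulVec_mem {p : Submodule 𝕜 (ι → 𝕜)} {M : Matrix ι ι 𝕜}
    (hM : ∀ v ∈ p, M *ᵥ v ∈ p) {v : ι → 𝕜} (hv : v ∈ p) : exp M *ᵥ v ∈ p :=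
  exp_mem (R := 𝕜) (isClosed_invariantSubalgebra p) hM v hv

end Invariant

section BlockFlag

variable {ι κ : Type*} [Fintype ι] [DecidableEq ι] [Fintype κ] [DecidableEq κ]

/-- `I_{n,k}`: the first `k` columns of the `n × n` identity, with `n = k + m` split as `ι ⊕ κ`. -/
abbrev firstColumnsOfOne (ι κ : Type*) [DecidableEq ι] : Matrix (ι ⊕ κ) ι ℝ := fromRows 1 0

omit [Fintype κ] [DecidableEq κ] in
theorem mem_colSpan_firstColumnsOfOne {v : ι ⊕ κ → ℝ} :
    v ∈ colSpan (firstColumnsOfOne ι κ) ↔ v ∘ Sum.inr = 0 := by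
  constructor
  · rintro ⟨x, rfl⟩
    ext j
    simp
  · intro hv
    refine ⟨v ∘ Sum.inl, ?_⟩
    ext (i | j)
    · simp
    · simpa using (congrFun hv j).symm

omit [Fintype κ] [DecidableEq κ] in
theorem injective_firstColumnsOfOne_mulVec :
    Function.Injective (firstColumnsOfOne ι κ *ᵥ ·) := by
  intro x y hxy
  simpa using congrArg (· ∘ Sum.inl) hxy

omit [Fintype κ] [DecidableEq κ] in
theorem injective_submatrix_inr_mulVecLin {ι' : Type*} [Fintype ι'] {Q : Matrix (ι ⊕ κ) ι' ℝ}
    (hQ : Function.Injective Q.mulVecLin)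
    (hdisj : colSpan (firstColumnsOfOne ι κ) ⊓ colSpan Q = ⊥) :
    Function.Injective (Q.submatrix Sum.inr id).mulVecLin := by
  rw [← LinearMap.ker_eq_bot, LinearMap.ker_eq_bot']
  intro x hx
  have hmem : Q *ᵥ x ∈ colSpan (firstColumnsOfOne ι κ) ⊓ colSpan Q :=
    ⟨mem_colSpan_firstColumnsOfOne.2 hx, x, rfl⟩
  rw [hdisj, Submodule.mem_bot] at hmem
  exact hQ (by simpa using hmem)

omit [DecidableEq ι] [DecidableEq κ] in
theorem fromBlocks_zero_mulVec_inr_mem_colSpan (A : Matrix ι ι ℝ) (C : Matrix ι κ ℝ)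
    (B : Matrix κ ι ℝ) (w : ι ⊕ κ → ℝ) :
    (fromBlocks A C B 0 *ᵥ w) ∘ Sum.inr ∈ colSpan B :=
  ⟨w ∘ Sum.inl, by simp [fromBlocks_mulVec]⟩

theorem colSpan_submatrix_inr_exp_fromBlocks_mul_le (A : Matrix ι ι ℝ) (C : Matrix ι κ ℝ)
    (B : Matrix κ ι ℝ) :
    colSpan ((exp (fromBlocks A C B 0) * firstColumnsOfOne ι κ).submatrix Sum.inr id) ≤
      colSpan B := by
  rintro _ ⟨x, rfl⟩
  let p := (colSpan B).comap (LinearMap.funLeft ℝ ℝ (Sum.inr : κ → ι ⊕ κ))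
  have hx : firstColumnsOfOne ι κ *ᵥ x ∈ p := by simp [p, LinearMap.funLeft]
  have hsub : (exp (fromBlocks A C B 0) * firstColumnsOfOne ι κ).submatrix Sum.inr id *ᵥ x =
      (exp (fromBlocks A C B 0) *ᵥ (firstColumnsOfOne ι κ *ᵥ x)) ∘ Sum.inr := by
    rw [mulVec_mulVec]
    rfl
  rw [mulVecLin_apply, hsub]
  exact exp_mulVec_mem (fun w _ => fromBlocks_zero_mulVec_inr_mem_colSpan A C B w) hx

theorem colSpan_submatrix_inr_exp_fromBlocks_mul_eq (A : Matrix ι ι ℝ) (C : Matrix ι κ ℝ)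
    (B : Matrix κ ι ℝ)
    (hdisj : colSpan (firstColumnsOfOne ι κ) ⊓
      colSpan (exp (fromBlocks A C B 0) * firstColumnsOfOne ι κ) = ⊥) :
    colSpan ((exp (fromBlocks A C B 0) * firstColumnsOfOne ι κ).submatrix Sum.inr id) =
      colSpan B := by
  have hinj : Function.Injective (exp (fromBlocks A C B 0) * firstColumnsOfOne ι κ).mulVecLin := by
    have hexp : Function.Injective (exp (fromBlocks A C B 0) *ᵥ ·) :=
      mulVec_injective_iff_isUnit.2 (isUnit_exp _)
    rw [mulVecLin_mul, LinearMap.coe_comp]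
    exact hexp.comp injective_firstColumnsOfOne_mulVec
  refine Submodule.eq_of_le_of_finrank_le (colSpan_submatrix_inr_exp_fromBlocks_mul_le A C B) ?_
  calc Module.finrank ℝ (colSpan B) ≤ Fintype.card ι := B.rank_le_card_width
    _ = _ := by
      rw [colSpan, LinearMap.finrank_range_of_inj (injective_submatrix_inr_mulVecLin hinj hdisj),
        Module.finrank_fintype_fun_eq_card]

end BlockFlag

theorem flag_lemma_same_span_general {k m : ℕ}
    (A : Matrix (Fin k) (Fin k) ℝ)
    (B : Matrix (Fin m) (Fin k) ℝ)
    (H : Matrix (Fin k ⊕ Fin m) (Fin k ⊕ Fin m) ℝ)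
    (hH : H = Matrix.fromBlocks A (-Bᵀ) B 0)
    (Ink : Matrix (Fin k ⊕ Fin m) (Fin k) ℝ)
    (hInk : Ink = Matrix.of fun i j => if i = Sum.inl j then (1 : ℝ) else 0)
    (q : ℝ → Matrix (Fin k ⊕ Fin m) (Fin k) ℝ)
    (hq : ∀ t, q t = exp (t • H) * Ink)
    (hdisj : colSpan (q 0) ⊓ colSpan (q 1) = ⊥) :
    colSpan ((q 1).submatrix Sum.inr id) = colSpan B := by
  have hInk' : Ink = firstColumnsOfOne (Fin k) (Fin m) := by
    subst hInk
    ext (i | i) j <;> simp [one_apply, eq_comm]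
  have hq0 : q 0 = firstColumnsOfOne (Fin k) (Fin m) := by
    rw [hq, zero_smul, exp_zero, Matrix.one_mul, hInk']
  have hq1 : q 1 = exp (fromBlocks A (-Bᵀ) B 0) * firstColumnsOfOne (Fin k) (Fin m) := by
    rw [hq, one_smul, hH, hInk']
  rw [hq0, hq1] at hdisj
  rw [hq1]
  exact colSpan_submatrix_inr_exp_fromBlocks_mul_eq A (-Bᵀ) B hdisj

/-- Lemma 1 of the paper: if the column spans of `q(0) = I_{n,k}` and
`q(1)` intersect trivially, then the span of the last `n-k` rows block `q_{n-k}` of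
`q(1)` equals the column span of `B`. -/
theorem flag_lemma_same_span {k m : ℕ} (hk : 0 < k) (hkm : k < m)
    (A : Matrix (Fin k) (Fin k) ℝ) (hA : Aᵀ = -A)
    (B : Matrix (Fin m) (Fin k) ℝ)
    (H : Matrix (Fin k ⊕ Fin m) (Fin k ⊕ Fin m) ℝ)
    (hH : H = Matrix.fromBlocks A (-Bᵀ) B 0)
    (Ink : Matrix (Fin k ⊕ Fin m) (Fin k) ℝ)
    (hInk : Ink = Matrix.of fun i j => if i = Sum.inl j then (1 : ℝ) else 0)
    (q : ℝ → Matrix (Fin k ⊕ Fin m) (Fin k) ℝ)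
    (hq : ∀ t, q t = exp (t • H) * Ink)
    (hdisj : colSpan (q 0) ⊓ colSpan (q 1) = ⊥) :
    colSpan ((q 1).submatrix Sum.inr id) = colSpan B :=
  flag_lemma_same_span_general A B H hH Ink hInk q hq hdisj
end

section
/- Let H = [[A, -Bᵀ],[B, 0]] be an n×n skew-symmetric block matrix (A skew-symmetric k×k, B of size (n-k)×k) and q(t) = exp(tH)·I_{n,k}. If span{q(0)} ∩ span{q(1)} = {0}, then for all t ∈ [0,1], the column span of q(t) is contained in the column span of the n×2k matrix [q(0), q(1)]. -/
/-! Since the lower right block of `H` vanishes, `H² I_{n,k} = I_{n,k} (-BᵀB) + (H I_{n,k}) A`: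
the Krylov space `V = span [I_{n,k}, H I_{n,k}]`, of dimension at most `2k`, is `H`-invariant.
The matrices leaving `V` invariant form a closed subalgebra, so it contains `exp (tH)` too, and
`span q(t) ≤ V` for every `t`. Both `span q(0)` and `span q(1)` have dimension `k`; as they
intersect trivially, their sum has dimension `2k` and so fills `V`. -/

open Matrix NormedSpace

lemma colSpan_mul_le {n p r : Type*} [Fintype p] [Fintype r]
    (X : Matrix n p ℝ) (Y : Matrix p r ℝ) : colSpan (X * Y) ≤ colSpan X := by
  rw [colSpan, colSpan, Matrix.mulVecLin_mul]
  exact LinearMap.range_comp_le_range _ _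

lemma colSpan_fromCols {n p₁ p₂ : Type*} [Fintype p₁] [Fintype p₂]
    (X : Matrix n p₁ ℝ) (Y : Matrix n p₂ ℝ) :
    colSpan (fromCols X Y) = colSpan X ⊔ colSpan Y := by
  apply le_antisymm
  · rintro x ⟨v, rfl⟩
    rw [Matrix.mulVecLin_apply, ← Sum.elim_comp_inl_inr v, Matrix.fromCols_mulVec_sumElim]
    exact Submodule.add_mem_sup ⟨_, rfl⟩ ⟨_, rfl⟩
  · apply sup_le
    · rintro x ⟨v, rfl⟩
      exact ⟨Sum.elim v 0, by simp⟩
    · rintro x ⟨v, rfl⟩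
      exact ⟨Sum.elim 0 v, by simp⟩

lemma finrank_colSpan {n p : Type*} [Fintype p] (X : Matrix n p ℝ) :
    Module.finrank ℝ (colSpan X) = X.rank :=
  rfl

def matrixStabilizer {n : Type*} [Fintype n] [DecidableEq n] (V : Submodule ℝ (n → ℝ)) :
    Subalgebra ℝ (Matrix n n ℝ) where
  carrier := {M | ∀ v ∈ V, M *ᵥ v ∈ V}
  mul_mem' {M N} hM hN v hv := by
    rw [← Matrix.mulVec_mulVec]
    exact hM _ (hN v hv)
  add_mem' {M N} hM hN v hv := by
    rw [Matrix.add_mulVec]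
    exact V.add_mem (hM v hv) (hN v hv)
  algebraMap_mem' r v hv := by
    rw [Algebra.algebraMap_eq_smul_one, Matrix.smul_mulVec, Matrix.one_mulVec]
    exact V.smul_mem r hv

lemma isClosed_matrixStabilizer {n : Type*} [Fintype n] [DecidableEq n]
    (V : Submodule ℝ (n → ℝ)) : IsClosed (matrixStabilizer V : Set (Matrix n n ℝ)) := by
  have hV : IsClosed (V : Set (n → ℝ)) := V.closed_of_finiteDimensional
  have : (matrixStabilizer V : Set (Matrix n n ℝ)) = ⋂ v ∈ V, (· *ᵥ v) ⁻¹' V := by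
    ext M
    simp only [Set.mem_iInter]
    rfl
  rw [this]
  exact isClosed_biInter fun v _ => hV.preimage (continuous_id.matrix_mulVec continuous_const)

lemma exp_mem_matrixStabilizer {n : Type*} [Fintype n] [DecidableEq n]
    {V : Submodule ℝ (n → ℝ)} {M : Matrix n n ℝ} (hM : M ∈ matrixStabilizer V) :
    exp M ∈ matrixStabilizer V :=
  exp_mem (isClosed_matrixStabilizer V) hM

lemma colSpan_mul_le_of_mem_matrixStabilizer {n p : Type*} [Fintype n] [DecidableEq n]
    [Fintype p] {V : Submodule ℝ (n → ℝ)} {M : Matrix n n ℝ} (hM : M ∈ matrixStabilizer V)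
    {Y : Matrix n p ℝ} (hY : colSpan Y ≤ V) : colSpan (M * Y) ≤ V := by
  rintro x ⟨v, rfl⟩
  rw [Matrix.mulVecLin_apply, ← Matrix.mulVec_mulVec]
  exact hM _ (hY ⟨v, rfl⟩)

lemma mem_matrixStabilizer_colSpan_of_mul_eq {n p : Type*} [Fintype n] [DecidableEq n]
    [Fintype p] {H : Matrix n n ℝ} {C : Matrix n p ℝ} {M : Matrix p p ℝ} (h : H * C = C * M) :
    H ∈ matrixStabilizer (colSpan C) := by
  rintro x ⟨v, rfl⟩
  rw [Matrix.mulVecLin_apply, Matrix.mulVec_mulVec, h]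
  exact colSpan_mul_le C M ⟨v, rfl⟩

lemma rank_fromRows_one_zero {n m : Type*} [Fintype n] [DecidableEq n] [Fintype m] :
    (fromRows (1 : Matrix n n ℝ) (0 : Matrix m n ℝ)).rank = Fintype.card n := by
  refine le_antisymm (rank_le_card_width _) ?_
  have h := rank_mul_le_right (fromCols (1 : Matrix n n ℝ) (0 : Matrix n m ℝ))
    (fromRows (1 : Matrix n n ℝ) (0 : Matrix m n ℝ))
  rwa [fromCols_mul_fromRows, Matrix.one_mul, Matrix.zero_mul, add_zero, rank_one] at h

lemma rank_exp_mul {n p : Type*} [Fintype n] [DecidableEq n] [Fintype p]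
    (M : Matrix n n ℝ) (Y : Matrix n p ℝ) : (exp M * Y).rank = Y.rank :=
  rank_mul_eq_right_of_isUnit_det _ _ ((Matrix.isUnit_iff_isUnit_det _).mp (isUnit_exp M))

lemma colSpan_sup_eq_of_inf_eq_bot {n p₁ p₂ r : Type*} [Fintype n] [Fintype p₁] [Fintype p₂]
    [Fintype r] {X : Matrix n p₁ ℝ} {Y : Matrix n p₂ ℝ} {C : Matrix n r ℝ}
    (hX : colSpan X ≤ colSpan C) (hY : colSpan Y ≤ colSpan C)
    (hXY : colSpan X ⊓ colSpan Y = ⊥) (hrank : C.rank ≤ X.rank + Y.rank) :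
    colSpan X ⊔ colSpan Y = colSpan C := by
  refine Submodule.eq_of_le_of_finrank_le (sup_le hX hY) ?_
  have h := Submodule.finrank_sup_add_finrank_inf_eq (colSpan X) (colSpan Y)
  rw [hXY, finrank_bot, add_zero] at h
  simpa only [h, finrank_colSpan] using hrank

lemma fromBlocks_mul_fromBlocks_mul_fromRows_one_zero {k m R : Type*} [Fintype k] [Fintype m]
    [DecidableEq k] [CommRing R] (A : Matrix k k R) (B : Matrix m k R) (C : Matrix k m R) :
    let E := fromRows (1 : Matrix k k R) (0 : Matrix m k R)
    fromBlocks A C B 0 * (fromBlocks A C B 0 * E) = E * (C * B) + fromBlocks A C B 0 * E * A := by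
  simp only [fromBlocks_mul_fromRows, fromRows_mul, Matrix.mul_one, Matrix.mul_zero,
    Matrix.zero_mul, add_zero]
  ext (i | i) j <;> simp [add_comm]

lemma mul_fromCols_eq_fromCols_mul_fromBlocks {n k R : Type*} [Fintype n] [Fintype k]
    [DecidableEq k] [CommRing R] {H : Matrix n n R} {E : Matrix n k R} {X Y : Matrix k k R}
    (h : H * (H * E) = E * X + H * E * Y) :
    H * fromCols E (H * E) = fromCols E (H * E) * fromBlocks 0 X 1 Y := by
  rw [Matrix.mul_fromCols, fromCols_mul_fromBlocks, ← h]
  simp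

theorem flag_2k_embedding_general {k m : ℕ}
    (A : Matrix (Fin k) (Fin k) ℝ)
    (B : Matrix (Fin m) (Fin k) ℝ)
    (H : Matrix (Fin k ⊕ Fin m) (Fin k ⊕ Fin m) ℝ)
    (hH : H = Matrix.fromBlocks A (-Bᵀ) B 0)
    (Ink : Matrix (Fin k ⊕ Fin m) (Fin k) ℝ)
    (hInk : Ink = Matrix.of fun i j => if i = Sum.inl j then (1 : ℝ) else 0)
    (q : ℝ → Matrix (Fin k ⊕ Fin m) (Fin k) ℝ)
    (hq : ∀ t, q t = exp (t • H) * Ink)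
    (hdisj : colSpan (q 0) ⊓ colSpan (q 1) = ⊥) :
    ∀ t ∈ Set.Icc (0 : ℝ) 1,
      colSpan (q t) ≤ colSpan (Matrix.fromCols (q 0) (q 1)) := by
  have hInk' : Ink = fromRows 1 0 := by
    rw [hInk]
    ext (i | i) j <;> simp [Matrix.one_apply]
  set C := fromCols Ink (H * Ink)
  have hHC : H * C = C * fromBlocks 0 (-Bᵀ * B) 1 A := by
    refine mul_fromCols_eq_fromCols_mul_fromBlocks ?_
    rw [hH, hInk']
    exact fromBlocks_mul_fromBlocks_mul_fromRows_one_zero A B (-Bᵀ)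
  have hInkC : colSpan Ink ≤ colSpan C := colSpan_fromCols Ink (H * Ink) ▸ le_sup_left
  have hqC (t : ℝ) : colSpan (q t) ≤ colSpan C := by
    rw [hq]
    refine colSpan_mul_le_of_mem_matrixStabilizer (exp_mem_matrixStabilizer ?_) hInkC
    exact Subalgebra.smul_mem _ (mem_matrixStabilizer_colSpan_of_mul_eq hHC) t
  have hrank (t : ℝ) : (q t).rank = k := by
    rw [hq, rank_exp_mul, hInk', rank_fromRows_one_zero, Fintype.card_fin]
  have hsup : colSpan (q 0) ⊔ colSpan (q 1) = colSpan C := by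
    refine colSpan_sup_eq_of_inf_eq_bot (hqC 0) (hqC 1) hdisj ?_
    simpa only [hrank, Fintype.card_sum, Fintype.card_fin] using rank_le_card_width C
  intro t _
  rw [colSpan_fromCols, hsup]
  exact hqC t

/-- Theorem 1, the 2k-embedding theorem: if the column spans of
`q(0)` and `q(1)` intersect trivially then for all `t ∈ [0,1]` the column span of
`q(t)` is contained in the column span of the `n×2k` matrix `[q(0), q(1)]`. -/
theorem flag_2k_embedding {k m : ℕ} (hk : 0 < k) (hkm : k < m)
    (A : Matrix (Fin k) (Fin k) ℝ) (hA : Aᵀ = -A)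
    (B : Matrix (Fin m) (Fin k) ℝ)
    (H : Matrix (Fin k ⊕ Fin m) (Fin k ⊕ Fin m) ℝ)
    (hH : H = Matrix.fromBlocks A (-Bᵀ) B 0)
    (Ink : Matrix (Fin k ⊕ Fin m) (Fin k) ℝ)
    (hInk : Ink = Matrix.of fun i j => if i = Sum.inl j then (1 : ℝ) else 0)
    (q : ℝ → Matrix (Fin k ⊕ Fin m) (Fin k) ℝ)
    (hq : ∀ t, q t = exp (t • H) * Ink)
    (hdisj : colSpan (q 0) ⊓ colSpan (q 1) = ⊥) :
    ∀ t ∈ Set.Icc (0 : ℝ) 1,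
      colSpan (q t) ≤ colSpan (Matrix.fromCols (q 0) (q 1)) :=
  flag_2k_embedding_general A B H hH Ink hInk q hq hdisj
end
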